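/- arXiv:2203.09078 — 5 statements merged into one kernel-verified Lean document; each statement's English description precedes it below -/
import Mathlib

section
/- Let A and B be commutative rings with identity and f : A → B a ring homomorphism whose kernel is contained in the nilradical of A. Then for every prime ideal P of A there exists a prime ideal Q of B such that f⁻¹(Q) ⊆ P. -/
theorem stmt_0 {A B : Type*} [CommRing A] [CommRing B] (f : A →+* B)
    (hker : (RingHom.ker f : Ideal A) ≤ nilradical A) :
    ∀ P : Ideal A, P.IsPrime → ∃ Q : Ideal B, Q.IsPrime ∧ Q.comap f ≤ P := by
  intro P hP
  have hbot : (⊥ : Ideal B).comap f ≤ P := hker.trans (nilradical_le_prime P)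
  obtain ⟨Q, -, hQ, hQP⟩ := Ideal.exists_ideal_comap_le_prime P ⊥ hbot
  exact ⟨Q, hQ, hQP⟩
end

section
/- If A is a dense subring of B and B is a dense subring of C, then A is a dense subring of C. -/
/-! Density need only be tested against prime ideals, since `rad I` is the intersection of the
primes containing `I`. Given a prime `P` of `C` and `b ∉ P`, density of `B` gives `c ∉ P` with
`c * b ∈ B`; density of `A` in `B` at the prime `P ∩ B` then gives `a' ∉ P` in `B` with
`a' * (c * b) ∈ A`, so `a' * c` is the required multiplier. -/

/-- A subring `A` of `C` is dense if for every ideal `I` of `C` and every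
`b ∉ rad I` there exists `a ∉ rad I` with `a * b ∈ A`. -/
def IsDenseSubring {C : Type*} [CommRing C] (A : Subring C) : Prop :=
  ∀ I : Ideal C, ∀ b ∉ I.radical, ∃ a ∉ I.radical, a * b ∈ A

theorem isDenseSubring_iff_forall_isPrime {C : Type*} [CommRing C] (A : Subring C) :
    IsDenseSubring A ↔ ∀ P : Ideal C, P.IsPrime → ∀ b ∉ P, ∃ a ∉ P, a * b ∈ A := by
  constructor
  · intro hA P hP b hb
    simpa only [hP.radical] using hA P b (by rwa [hP.radical])
  · intro hA I b hb
    obtain ⟨P, ⟨hIP, hP⟩, hbP⟩ : ∃ P ∈ {J : Ideal C | I ≤ J ∧ J.IsPrime}, b ∉ P := by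
      simpa only [Ideal.radical_eq_sInf, Submodule.mem_sInf, not_forall, exists_prop] using hb
    obtain ⟨a, haP, hab⟩ := hA P hP b hbP
    exact ⟨a, fun ha => haP (hP.radical_le_iff.mpr hIP ha), hab⟩

theorem stmt_4_general {C : Type*} [CommRing C] (A B : Subring C)
    (hAdenseB : IsDenseSubring (A.comap B.subtype))
    (hBdenseC : IsDenseSubring B) : IsDenseSubring A := by
  rw [isDenseSubring_iff_forall_isPrime] at hAdenseB hBdenseC ⊢
  intro P hP b hbP
  obtain ⟨c, hcP, hcb⟩ := hBdenseC P hP b hbP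
  obtain ⟨a', ha'P, ha'cb⟩ := hAdenseB (P.comap B.subtype) (Ideal.comap_isPrime B.subtype P)
    ⟨c * b, hcb⟩ (hP.mul_notMem hcP hbP)
  refine ⟨a' * c, hP.mul_notMem ha'P hcP, ?_⟩
  rw [mul_assoc]
  exact ha'cb

theorem stmt_4 {C : Type*} [CommRing C] (A B : Subring C) (hAB : A ≤ B)
    (hAdenseB : IsDenseSubring (A.comap B.subtype))
    (hBdenseC : IsDenseSubring B) : IsDenseSubring A :=
  stmt_4_general A B hAdenseB hBdenseC
end

section
/- Let A be a subring of B such that the map i* : Spec B → Spec A, P ↦ P ∩ A, is injective and open onto its image. Then A is a dense subring of B: for every ideal I of B and every b ∉ rad(I) there exists u ∉ rad(I) with u·b ∈ A. -/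
/-!
Take a prime `P ⊇ I` with `b ∉ P`. Since `i*` is open onto its image, the image of `D(b)` contains
a basic neighbourhood `D(a) ∩ i*(Spec B)` of `i*(P)` with `a ∈ A`, and injectivity of `i*` pulls
this back to `D(a) ⊆ D(b)` in `Spec B`. Hence `a ^ n = u * b` for some `n` and `u ∈ B`, and `u ∉ P`
because `a ∉ P`; so `u ∉ rad(I)` while `u * b = a ^ n ∈ A`.
-/

def IsOpenOntoRange {X Y : Type*} [TopologicalSpace X] [TopologicalSpace Y] (g : X → Y) : Prop :=
  ∀ V : Set X, IsOpen V → ∃ U : Set Y, IsOpen U ∧ g '' V = U ∩ Set.range g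

namespace PrimeSpectrum

variable {R S : Type*} [CommRing R] [CommRing S]

theorem exists_basicOpen_map_subset_of_isOpen {f : R →+* S} (hinj : Function.Injective (comap f))
    (hopen : IsOpenOntoRange (comap f)) {V : Set (PrimeSpectrum S)} (hV : IsOpen V)
    {P : PrimeSpectrum S} (hP : P ∈ V) :
    ∃ a : R, P ∈ basicOpen (f a) ∧ (basicOpen (f a) : Set (PrimeSpectrum S)) ⊆ V := by
  obtain ⟨U, hU, himage⟩ := hopen V hV
  have hPU : comap f P ∈ U := (himage ▸ Set.mem_image_of_mem (comap f) hP).1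
  obtain ⟨_, ⟨a, rfl⟩, hPa, haU⟩ :=
    isTopologicalBasis_basic_opens.exists_subset_of_mem_open hPU hU
  refine ⟨a, hPa, fun Q hQ => ?_⟩
  have hQV : comap f Q ∈ comap f '' V := himage ▸ ⟨haU hQ, Q, rfl⟩
  rwa [← Set.mem_preimage, Set.preimage_image_eq V hinj] at hQV

theorem exists_mul_eq_pow_of_basicOpen_le {a b : S} (hab : basicOpen a ≤ basicOpen b)
    {P : PrimeSpectrum S} (ha : P ∈ basicOpen a) :
    ∃ u ∉ P.asIdeal, ∃ n : ℕ, u * b = a ^ n := by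
  obtain ⟨n, hn⟩ := (basicOpen_le_basicOpen_iff a b).mp hab
  obtain ⟨u, hu⟩ := Ideal.mem_span_singleton'.mp hn
  refine ⟨u, fun huP => ha (P.isPrime.mem_of_pow_mem n ?_), n, hu⟩
  exact hu ▸ P.asIdeal.mul_mem_right b huP

theorem exists_mul_mem_range_of_notMem {f : R →+* S} (hinj : Function.Injective (comap f))
    (hopen : IsOpenOntoRange (comap f)) {P : PrimeSpectrum S} {b : S} (hb : b ∉ P.asIdeal) :
    ∃ u ∉ P.asIdeal, u * b ∈ f.range := by
  obtain ⟨a, hPa, hab⟩ :=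
    exists_basicOpen_map_subset_of_isOpen hinj hopen (basicOpen b).isOpen hb
  obtain ⟨u, huP, n, hu⟩ := exists_mul_eq_pow_of_basicOpen_le hab hPa
  exact ⟨u, huP, a ^ n, by rw [map_pow, hu]⟩

end PrimeSpectrum

open PrimeSpectrum

theorem stmt_13 {B : Type*} [CommRing B] (A : Subring B)
    (hinj : Function.Injective (fun P : PrimeSpectrum B => PrimeSpectrum.comap A.subtype P))
    (hopen : ∀ V : Set (PrimeSpectrum B), IsOpen V →
      ∃ U : Set (PrimeSpectrum A), IsOpen U ∧
        PrimeSpectrum.comap A.subtype '' V = U ∩ Set.range (PrimeSpectrum.comap A.subtype)) :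
    ∀ I : Ideal B, ∀ b ∉ I.radical, ∃ u ∉ I.radical, u * b ∈ A := by
  intro I b hb
  obtain ⟨P, hIP, hbP⟩ : ∃ P ∈ zeroLocus (I : Set B), b ∉ P.asIdeal := by
    simpa [← vanishingIdeal_zeroLocus_eq_radical, mem_vanishingIdeal] using hb
  obtain ⟨u, huP, hub⟩ := exists_mul_mem_range_of_notMem hinj hopen hbP
  have hradP : I.radical ≤ P.asIdeal := P.isPrime.radical_le_iff.mpr ((mem_zeroLocus _ _).mp hIP)
  exact ⟨u, fun huI => huP (hradP huI), by simpa using hub⟩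
end

section
/- Let A be a commutative ring with 1 such that for any two non-comparable prime ideals P, P' of A, the closures of {P} and {P'} in Spec A are disjoint. If moreover A is a pm-ring, then Spec A is completely normal in the specialization order sense: for any prime ideal P, any two prime ideals containing P are comparable. -/
/-!
Two primes containing a common prime `P` lie in the same maximal ideal, namely the unique
maximal ideal above `P`. That maximal ideal is a common point of their closures in `Spec A`,
so the disjointness hypothesis forces them to be comparable.
-/

theorem PrimeSpectrum.le_or_le_of_le_of_le {A : Type*} [CommRing A]
    (hwcn : ∀ p p' : PrimeSpectrum A, ¬ p.asIdeal ≤ p'.asIdeal → ¬ p'.asIdeal ≤ p.asIdeal →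
      closure {p} ∩ closure {p'} = (∅ : Set (PrimeSpectrum A)))
    {p q r : PrimeSpectrum A} (hpr : p ≤ r) (hqr : q ≤ r) : p ≤ q ∨ q ≤ p := by
  by_contra! hpq
  have hr : r ∈ closure {p} ∩ closure {q} :=
    ⟨(p.le_iff_mem_closure r).mp hpr, (q.le_iff_mem_closure r).mp hqr⟩
  rw [hwcn p q hpq.1 hpq.2] at hr
  exact hr

theorem Ideal.exists_isMaximal_ge_of_ge_of_ge {A : Type*} [CommRing A]
    (hpm : ∀ P : Ideal A, P.IsPrime → ∃! M : Ideal A, M.IsMaximal ∧ P ≤ M)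
    {P Q Q' : Ideal A} (hP : P.IsPrime) (hQ : Q ≠ ⊤) (hQ' : Q' ≠ ⊤)
    (hPQ : P ≤ Q) (hPQ' : P ≤ Q') : ∃ M : Ideal A, M.IsMaximal ∧ Q ≤ M ∧ Q' ≤ M := by
  obtain ⟨M, hM, hQM⟩ := Q.exists_le_maximal hQ
  obtain ⟨M', hM', hQM'⟩ := Q'.exists_le_maximal hQ'
  have hMM' : M' = M := (hpm P hP).unique ⟨hM', hPQ'.trans hQM'⟩ ⟨hM, hPQ.trans hQM⟩
  exact ⟨M, hM, hQM, hMM' ▸ hQM'⟩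

theorem stmt_15 {A : Type*} [CommRing A]
    (hwcn : ∀ p p' : PrimeSpectrum A, ¬ p.asIdeal ≤ p'.asIdeal → ¬ p'.asIdeal ≤ p.asIdeal →
      closure {p} ∩ closure {p'} = (∅ : Set (PrimeSpectrum A)))
    (hpm : ∀ P : Ideal A, P.IsPrime → ∃! M : Ideal A, M.IsMaximal ∧ P ≤ M) :
    ∀ P Q Q' : Ideal A, P.IsPrime → Q.IsPrime → Q'.IsPrime →
      P ≤ Q → P ≤ Q' → Q ≤ Q' ∨ Q' ≤ Q := by
  intro P Q Q' hP hQ hQ' hPQ hPQ'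
  obtain ⟨M, hM, hQM, hQ'M⟩ :=
    Ideal.exists_isMaximal_ge_of_ge_of_ge hpm hP hQ.ne_top hQ'.ne_top hPQ hPQ'
  exact PrimeSpectrum.le_or_le_of_le_of_le hwcn
    (p := ⟨Q, hQ⟩) (q := ⟨Q', hQ'⟩) (r := ⟨M, hM.isPrime⟩) hQM hQ'M
end

section
/- For any topological space X, the ring C*(X) of bounded real-valued continuous functions is a dense subring of any intermediate ring A with C*(X) ⊆ A ⊆ C(X): for every ideal I of A and f ∉ rad(I), there exists g ∉ rad(I) with f·g ∈ C*(X). -/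
theorem stmt_19 {X : Type*} [TopologicalSpace X] (A : Subring C(X, ℝ))
    (hCstar : ∀ f : C(X, ℝ), (∃ M : ℝ, ∀ x, |f x| ≤ M) → f ∈ A) :
    ∀ I : Ideal A, ∀ f : A, f ∉ I.radical →
      ∃ g : A, g ∉ I.radical ∧ ∃ M : ℝ, ∀ x, |((f * g : A) : C(X, ℝ)) x| ≤ M := by
  intro I f hf
  have hpos : ∀ x, (0:ℝ) < 1 + ((f : C(X, ℝ)) x) ^ 2 := fun x => by positivity
  have hcont : Continuous fun x => (1 + ((f : C(X, ℝ)) x) ^ 2)⁻¹ := by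
    apply Continuous.inv₀
    · fun_prop
    · intro x; exact (hpos x).ne'
  set h : C(X, ℝ) := ⟨_, hcont⟩ with hh
  have hA : h ∈ A := by
    apply hCstar
    refine ⟨1, fun x => ?_⟩
    have h1 : (1:ℝ) ≤ 1 + ((f : C(X, ℝ)) x) ^ 2 := by nlinarith [sq_nonneg ((f : C(X, ℝ)) x)]
    show |(1 + ((f : C(X, ℝ)) x) ^ 2)⁻¹| ≤ 1
    rw [abs_of_pos (inv_pos.mpr (hpos x))]
    exact inv_le_one_of_one_le₀ h1
  refine ⟨f * ⟨h, hA⟩, ?_, ?_⟩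
  · intro hg
    apply hf
    have key : (1 + f * f) * (f * ⟨h, hA⟩) = f := by
      ext x
      simp only [Subring.coe_mul, Subring.coe_add, Subring.coe_one,
        ContinuousMap.mul_apply, ContinuousMap.add_apply, ContinuousMap.one_apply, hh,
        ContinuousMap.coe_mk]
      field_simp
    have := I.radical.mul_mem_left (1 + f * f) hg
    rwa [key] at this
  · refine ⟨1, fun x => ?_⟩
    simp only [Subring.coe_mul, ContinuousMap.mul_apply, hh, ContinuousMap.coe_mk]
    rw [abs_le]
    constructor
    · nlinarith [hpos x, sq_nonneg ((f : C(X, ℝ)) x), inv_pos.mpr (hpos x)]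
    · rw [show ((f : C(X,ℝ)) x * ((f : C(X,ℝ)) x * (1 + ((f : C(X,ℝ)) x)^2)⁻¹)) = ((f : C(X,ℝ)) x)^2 / (1 + ((f : C(X,ℝ)) x)^2) by rw [div_eq_mul_inv]; ring]
      rw [div_le_one (hpos x)]
      linarith
end
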